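/- Let $\mathcal{W}_\Theta$ map vectors $x$ to pairs of admissible diagonal weight matrices and be $L_\mathcal{W}$-Lipschitz on a ball $\mathcal{B} = \{x : \|x\|_2 \le r\}$ (in the sense that $\|W_i(x) - W_i(y)\|_2 \le L_\mathcal{W}\|x-y\|_2$ for $i=1,2$). Define $\mathcal{T}(x) = A(\mathcal{W}_\Theta(x))^{-1} S^\top f$. Then $\mathcal{T}$ is Lipschitz on $\mathcal{B}$ with constant at most $\frac{(\lambda_1\|G\|^2 + \lambda_2\|R\|^2)\,L_\mathcal{W}\,\|S\|\,\|f\|_2}{\alpha^2}$. -/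

import Mathlib

open Matrix

/-- Euclidean norm of a finitely supported real vector. -/
noncomputable def vnorm {ι : Type*} [Fintype ι] (v : ι → ℝ) : ℝ :=
  Real.sqrt (v ⬝ᵥ v)

/-- Spectral (ℓ²→ℓ²) operator norm of a matrix. -/
noncomputable def opNorm {ι κ : Type*} [Fintype ι] [Fintype κ] [DecidableEq κ]
    (M : Matrix ι κ ℝ) : ℝ :=
  ‖LinearMap.toContinuousLinearMap (Matrix.toEuclideanLin M)‖

lemma vnorm_eq {ι : Type*} [Fintype ι] (v : ι → ℝ) :
    vnorm v = ‖(WithLp.equiv 2 (ι → ℝ)).symm v‖ := by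
  rw [vnorm, EuclideanSpace.norm_eq]
  congr 1
  simp [dotProduct, Real.norm_eq_abs, sq_abs, sq]

lemma vnorm_nonneg {ι : Type*} [Fintype ι] (v : ι → ℝ) : 0 ≤ vnorm v :=
  Real.sqrt_nonneg _

lemma vnorm_sq {ι : Type*} [Fintype ι] (v : ι → ℝ) : vnorm v ^ 2 = v ⬝ᵥ v := by
  rw [vnorm, Real.sq_sqrt (by simpa using dotProduct_self_star_nonneg v)]

lemma opNorm_nonneg {ι κ : Type*} [Fintype ι] [Fintype κ] [DecidableEq κ]
    (M : Matrix ι κ ℝ) : 0 ≤ opNorm M := norm_nonneg _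

lemma vnorm_mulVec_le {ι κ : Type*} [Fintype ι] [Fintype κ] [DecidableEq κ]
    (M : Matrix ι κ ℝ) (v : κ → ℝ) : vnorm (M *ᵥ v) ≤ opNorm M * vnorm v := by
  rw [vnorm_eq, vnorm_eq, WithLp.equiv_symm_apply, WithLp.equiv_symm_apply,
    ← Matrix.toEuclideanLin_apply_piLp_toLp]
  exact (LinearMap.toContinuousLinearMap (Matrix.toEuclideanLin M)).le_opNorm _

lemma dotProduct_le {ι : Type*} [Fintype ι] (u v : ι → ℝ) :
    u ⬝ᵥ v ≤ vnorm u * vnorm v := by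
  rw [vnorm_eq, vnorm_eq]
  have h := real_inner_le_norm ((WithLp.equiv 2 (ι → ℝ)).symm u)
    ((WithLp.equiv 2 (ι → ℝ)).symm v)
  simpa [PiLp.inner_apply, RCLike.inner_apply, dotProduct, mul_comm] using h

lemma vnorm_transpose_mulVec_le {ι κ : Type*} [Fintype ι] [Fintype κ]
    [DecidableEq ι] [DecidableEq κ]
    (M : Matrix ι κ ℝ) (v : ι → ℝ) : vnorm (Mᵀ *ᵥ v) ≤ opNorm M * vnorm v := by
  set w := Mᵀ *ᵥ v with hw
  have h1 : w ⬝ᵥ w = v ⬝ᵥ (M *ᵥ w) := by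
    rw [hw, Matrix.mulVec_transpose, ← Matrix.dotProduct_mulVec]
  have h2 : vnorm w ^ 2 ≤ vnorm v * (opNorm M * vnorm w) := by
    rw [vnorm_sq, h1]
    exact (dotProduct_le _ _).trans
      (mul_le_mul_of_nonneg_left (vnorm_mulVec_le M w) (vnorm_nonneg v))
  rcases eq_or_lt_of_le (vnorm_nonneg w) with h0 | h0
  · rw [← h0]; exact mul_nonneg (opNorm_nonneg M) (vnorm_nonneg v)
  · nlinarith [h2, vnorm_nonneg v, opNorm_nonneg M]

lemma vnorm_smul {ι : Type*} [Fintype ι] (c : ℝ) (v : ι → ℝ) :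
    vnorm (c • v) = |c| * vnorm v := by
  rw [vnorm, vnorm, smul_dotProduct, dotProduct_smul, smul_eq_mul, smul_eq_mul, ← mul_assoc,
    Real.sqrt_mul (mul_self_nonneg c), Real.sqrt_mul_self_eq_abs]

lemma vnorm_add_le {ι : Type*} [Fintype ι] (u v : ι → ℝ) :
    vnorm (u + v) ≤ vnorm u + vnorm v := by
  rw [vnorm_eq, vnorm_eq, vnorm_eq]
  exact norm_add_le ((WithLp.equiv 2 (ι → ℝ)).symm u) ((WithLp.equiv 2 (ι → ℝ)).symm v)

lemma vnorm_sub_comm {ι : Type*} [Fintype ι] (u v : ι → ℝ) :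
    vnorm (u - v) = vnorm (v - u) := by
  rw [vnorm, vnorm]
  congr 1
  apply Finset.sum_congr rfl
  intro i _
  simp only [Pi.sub_apply]
  ring

/-- Lipschitz bound, Theorem 1: if the weight operator `𝒲_Θ` is `L_𝒲`-Lipschitz
on the ball `ℬ = {x : ‖x‖₂ ≤ r}` and yields admissible weights, then the map
`𝒯(x) = A(𝒲_Θ(x))⁻¹ Sᵀ f` is Lipschitz on `ℬ` with constant at most
`(λ₁‖G‖² + λ₂‖R‖²) L_𝒲 ‖S‖ ‖f‖₂ / α²`. -/
theorem stmt5 {N n m1 m2 : ℕ}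
    (S : Matrix (Fin n) (Fin N) ℝ) (G : Matrix (Fin m1) (Fin N) ℝ)
    (R : Matrix (Fin m2) (Fin N) ℝ)
    (l1 l2 : ℝ) (hl1 : 0 < l1) (hl2 : 0 < l2)
    (wmin wmax : ℝ) (hwmin : 0 < wmin) (hw : wmin ≤ wmax)
    (WΘ : (Fin N → ℝ) → Matrix (Fin m1) (Fin m1) ℝ × Matrix (Fin m2) (Fin m2) ℝ)
    (hadm : ∀ x, (WΘ x).1.IsDiag ∧ (WΘ x).2.IsDiag ∧
      ((WΘ x).1 - wmin • (1 : Matrix (Fin m1) (Fin m1) ℝ)).PosSemidef ∧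
      (wmax • (1 : Matrix (Fin m1) (Fin m1) ℝ) - (WΘ x).1).PosSemidef ∧
      ((WΘ x).2 - wmin • (1 : Matrix (Fin m2) (Fin m2) ℝ)).PosSemidef ∧
      (wmax • (1 : Matrix (Fin m2) (Fin m2) ℝ) - (WΘ x).2).PosSemidef)
    (A : (Fin N → ℝ) → Matrix (Fin N) (Fin N) ℝ)
    (hA : ∀ x, A x = Sᵀ * S + l1 • (Gᵀ * (WΘ x).1 * G) + l2 • (Rᵀ * (WΘ x).2 * R))
    (α : ℝ) (hα0 : 0 < α)
    (hcoer : ∀ x, ∀ y : Fin N → ℝ, α * (y ⬝ᵥ y) ≤ y ⬝ᵥ (A x *ᵥ y))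
    (r LW : ℝ) (hLW : 0 ≤ LW)
    (hLip : ∀ x y : Fin N → ℝ, vnorm x ≤ r → vnorm y ≤ r →
      opNorm ((WΘ x).1 - (WΘ y).1) ≤ LW * vnorm (x - y) ∧
      opNorm ((WΘ x).2 - (WΘ y).2) ≤ LW * vnorm (x - y))
    (f : Fin n → ℝ)
    (T : (Fin N → ℝ) → (Fin N → ℝ))
    (hT : ∀ x, T x = (A x)⁻¹ *ᵥ (Sᵀ *ᵥ f)) :
    ∀ x y : Fin N → ℝ, vnorm x ≤ r → vnorm y ≤ r →
      vnorm (T x - T y) ≤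
        (l1 * opNorm G ^ 2 + l2 * opNorm R ^ 2) * LW * opNorm S * vnorm f / α ^ 2
          * vnorm (x - y) := by
  intro x y hx hy
  -- invertibility of A z
  have hunit : ∀ z, IsUnit (A z).det := by
    intro z
    rw [isUnit_iff_ne_zero]
    intro hdet
    obtain ⟨v, hv0, hv⟩ := (Matrix.exists_mulVec_eq_zero_iff).mpr hdet
    have h1 := hcoer z v
    rw [hv] at h1
    simp only [dotProduct_zero] at h1
    have h2 : v ⬝ᵥ v ≤ 0 := by
      have := mul_le_mul_of_nonneg_left h1 (le_of_lt (inv_pos.mpr hα0))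
      simpa [mul_comm, ← mul_assoc, inv_mul_cancel₀ (ne_of_gt hα0)] using
        nonpos_of_mul_nonpos_right (by nlinarith) hα0
    exact hv0 (dotProduct_self_eq_zero.mp (le_antisymm h2
      (by simpa using dotProduct_self_star_nonneg v)))
  -- coercivity norm bound
  have hlow : ∀ z (u : Fin N → ℝ), α * vnorm u ≤ vnorm (A z *ᵥ u) := by
    intro z u
    have h1 : α * vnorm u ^ 2 ≤ vnorm u * vnorm (A z *ᵥ u) := by
      rw [vnorm_sq]
      exact (hcoer z u).trans (dotProduct_le u _)
    rcases eq_or_lt_of_le (vnorm_nonneg u) with h0 | h0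
    · rw [← h0, mul_zero]; exact vnorm_nonneg _
    · nlinarith
  -- inverse bound
  have hinvb : ∀ z (w : Fin N → ℝ), vnorm ((A z)⁻¹ *ᵥ w) ≤ vnorm w / α := by
    intro z w
    have hid : A z *ᵥ ((A z)⁻¹ *ᵥ w) = w := by
      rw [Matrix.mulVec_mulVec, Matrix.mul_nonsing_inv _ (hunit z), Matrix.one_mulVec]
    have := hlow z ((A z)⁻¹ *ᵥ w)
    rw [hid] at this
    rw [le_div_iff₀ hα0]
    linarith [this]
  -- bound on T y
  have hTyb : vnorm (T y) ≤ opNorm S * vnorm f / α := by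
    rw [hT y]
    refine (hinvb y _).trans ?_
    gcongr
    exact vnorm_transpose_mulVec_le S f
  -- difference identity
  have hkey : T x - T y = (A x)⁻¹ *ᵥ ((A y - A x) *ᵥ T y) := by
    have h1 : (A y - A x) *ᵥ T y = (Sᵀ *ᵥ f) - A x *ᵥ T y := by
      rw [Matrix.sub_mulVec]
      congr 1
      rw [hT y, Matrix.mulVec_mulVec, Matrix.mul_nonsing_inv _ (hunit y), Matrix.one_mulVec]
    have h2 : (A x)⁻¹ *ᵥ (A x *ᵥ T y) = T y := by
      rw [Matrix.mulVec_mulVec, Matrix.nonsing_inv_mul _ (hunit x), Matrix.one_mulVec]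
    rw [h1, Matrix.mulVec_sub, h2, hT x]
  -- decomposition of A y - A x
  set D1 := (WΘ y).1 - (WΘ x).1 with hD1
  set D2 := (WΘ y).2 - (WΘ x).2 with hD2
  have hdec : A y - A x = l1 • (Gᵀ * D1 * G) + l2 • (Rᵀ * D2 * R) := by
    rw [hA x, hA y, hD1, hD2]
    simp only [Matrix.mul_sub, Matrix.sub_mul, smul_sub]
    abel
  -- Lipschitz bounds on the weight differences
  obtain ⟨hL1, hL2⟩ := hLip y x hy hx
  rw [vnorm_sub_comm y x] at hL1 hL2
  set d := vnorm (x - y) with hd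
  have hd0 : 0 ≤ d := vnorm_nonneg _
  have hLd0 : 0 ≤ LW * d := mul_nonneg hLW hd0
  -- bound on (A y - A x) *ᵥ u
  have hΔ : ∀ u : Fin N → ℝ, vnorm ((A y - A x) *ᵥ u) ≤
      (l1 * opNorm G ^ 2 + l2 * opNorm R ^ 2) * (LW * d) * vnorm u := by
    intro u
    have b1 : vnorm ((Gᵀ * D1 * G) *ᵥ u) ≤ opNorm G * (LW * d * (opNorm G * vnorm u)) := by
      rw [← Matrix.mulVec_mulVec, ← Matrix.mulVec_mulVec]
      refine (vnorm_transpose_mulVec_le G _).trans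
        (mul_le_mul_of_nonneg_left ?_ (opNorm_nonneg G))
      refine (vnorm_mulVec_le D1 _).trans ?_
      exact mul_le_mul hL1 (vnorm_mulVec_le G u) (vnorm_nonneg _) hLd0
    have b2 : vnorm ((Rᵀ * D2 * R) *ᵥ u) ≤ opNorm R * (LW * d * (opNorm R * vnorm u)) := by
      rw [← Matrix.mulVec_mulVec, ← Matrix.mulVec_mulVec]
      refine (vnorm_transpose_mulVec_le R _).trans
        (mul_le_mul_of_nonneg_left ?_ (opNorm_nonneg R))
      refine (vnorm_mulVec_le D2 _).trans ?_
      exact mul_le_mul hL2 (vnorm_mulVec_le R u) (vnorm_nonneg _) hLd0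
    rw [hdec, Matrix.add_mulVec, Matrix.smul_mulVec, Matrix.smul_mulVec]
    refine (vnorm_add_le _ _).trans ?_
    rw [vnorm_smul, vnorm_smul, abs_of_pos hl1, abs_of_pos hl2]
    calc l1 * vnorm ((Gᵀ * D1 * G) *ᵥ u) + l2 * vnorm ((Rᵀ * D2 * R) *ᵥ u)
        ≤ l1 * (opNorm G * (LW * d * (opNorm G * vnorm u)))
          + l2 * (opNorm R * (LW * d * (opNorm R * vnorm u))) :=
          add_le_add (mul_le_mul_of_nonneg_left b1 hl1.le)
            (mul_le_mul_of_nonneg_left b2 hl2.le)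
      _ = (l1 * opNorm G ^ 2 + l2 * opNorm R ^ 2) * (LW * d) * vnorm u := by ring
  -- assemble
  have hC0 : 0 ≤ l1 * opNorm G ^ 2 + l2 * opNorm R ^ 2 :=
    add_nonneg (mul_nonneg hl1.le (pow_nonneg (opNorm_nonneg G) 2))
      (mul_nonneg hl2.le (pow_nonneg (opNorm_nonneg R) 2))
  calc vnorm (T x - T y) ≤ vnorm ((A y - A x) *ᵥ T y) / α := by
        rw [hkey]; exact hinvb x _
    _ ≤ ((l1 * opNorm G ^ 2 + l2 * opNorm R ^ 2) * (LW * d) * vnorm (T y)) / α := by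
        gcongr
        exact hΔ (T y)
    _ ≤ ((l1 * opNorm G ^ 2 + l2 * opNorm R ^ 2) * (LW * d) * (opNorm S * vnorm f / α)) / α := by
        gcongr
    _ = (l1 * opNorm G ^ 2 + l2 * opNorm R ^ 2) * LW * opNorm S * vnorm f / α ^ 2 * d := by
        field_simp
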